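/- arXiv:2104.00274 — 3 statements merged into one kernel-verified Lean document; each statement's English description precedes it below -/
import Mathlib

section
/- Let ν > 0, β ≥ 0, ū > 0, and let μ be defined by μ(p) = max(0, (−β − p)/ν) + min(0, (β − p)/ν) − max(0, −ū + (−p − β)/ν) − min(0, ū + (−p + β)/ν). Then μ is Lipschitz continuous with Lipschitz constant 1/ν. -/
noncomputable def mu (ν β ub p : ℝ) : ℝ :=
  max 0 ((-β - p) / ν) + min 0 ((β - p) / ν)
    - max 0 (-ub + (-p - β) / ν) - min 0 (ub + (-p + β) / ν)

noncomputable def hcl (u x : ℝ) : ℝ := max 0 x - max 0 (x - u)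

noncomputable def fmu (u a t : ℝ) : ℝ := hcl u (t - a) - hcl u (-t - a)

lemma max_abs (x : ℝ) : max 0 x = (x + |x|) / 2 := by
  rcases abs_cases x with ⟨h1, h2⟩ | ⟨h1, h2⟩ <;>
    rw [h1] <;> [rw [max_eq_right h2]; rw [max_eq_left (by linarith)]] <;> ring

lemma hcl_mono (u : ℝ) (hu : 0 ≤ u) {x y : ℝ} (hxy : x ≤ y) : hcl u x ≤ hcl u y := by
  unfold hcl
  rw [max_abs, max_abs, max_abs, max_abs]
  rcases abs_cases x with ⟨h1, h2⟩ | ⟨h1, h2⟩ <;>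
  rcases abs_cases (x - u) with ⟨h3, h4⟩ | ⟨h3, h4⟩ <;>
  rcases abs_cases y with ⟨h5, h6⟩ | ⟨h5, h6⟩ <;>
  rcases abs_cases (y - u) with ⟨h7, h8⟩ | ⟨h7, h8⟩ <;>
  linarith

lemma hcl_sub_le (u : ℝ) {x y : ℝ} (hxy : y ≤ x) :
    hcl u x - hcl u y ≤ max 0 x - max 0 y := by
  unfold hcl
  have : max 0 (y - u) ≤ max 0 (x - u) := max_le_max le_rfl (by linarith)
  linarith

lemma fmu_key (u a : ℝ) (hu : 0 ≤ u) (ha : 0 ≤ a) {s t : ℝ} (hst : s ≤ t) :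
    fmu u a t - fmu u a s ≤ t - s := by
  unfold fmu
  have h1 : hcl u (t - a) - hcl u (s - a) ≤ max 0 (t - a) - max 0 (s - a) :=
    hcl_sub_le u (by linarith)
  have h2 : hcl u (-s - a) - hcl u (-t - a) ≤ max 0 (-s - a) - max 0 (-t - a) :=
    hcl_sub_le u (by linarith)
  have h3 : (max 0 (t - a) - max 0 (s - a)) + (max 0 (-s - a) - max 0 (-t - a)) ≤ t - s := by
    rw [max_abs, max_abs, max_abs, max_abs]
    rcases abs_cases (t - a) with ⟨e1, e2⟩ | ⟨e1, e2⟩ <;>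
    rcases abs_cases (s - a) with ⟨e3, e4⟩ | ⟨e3, e4⟩ <;>
    rcases abs_cases (-s - a) with ⟨e5, e6⟩ | ⟨e5, e6⟩ <;>
    rcases abs_cases (-t - a) with ⟨e7, e8⟩ | ⟨e7, e8⟩ <;>
    linarith
  linarith

lemma fmu_lip (u a : ℝ) (hu : 0 ≤ u) (ha : 0 ≤ a) (s t : ℝ) :
    |fmu u a t - fmu u a s| ≤ |t - s| := by
  rcases le_total s t with hst | hst
  · have hmono : fmu u a s ≤ fmu u a t := by
      unfold fmu
      have := hcl_mono u hu (show s - a ≤ t - a by linarith)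
      have := hcl_mono u hu (show -t - a ≤ -s - a by linarith)
      linarith
    rw [abs_of_nonneg (by linarith), abs_of_nonneg (by linarith)]
    exact fmu_key u a hu ha hst
  · have hmono : fmu u a t ≤ fmu u a s := by
      unfold fmu
      have := hcl_mono u hu (show t - a ≤ s - a by linarith)
      have := hcl_mono u hu (show -s - a ≤ -t - a by linarith)
      linarith
    rw [abs_of_nonpos (by linarith), abs_of_nonpos (by linarith)]
    have := fmu_key u a hu ha hst
    linarith

lemma mu_eq_fmu (ν β ub p : ℝ) (hν : 0 < ν) :
    mu ν β ub p = fmu ub (β / ν) (-p / ν) := by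
  unfold mu fmu hcl
  have hmin : ∀ x : ℝ, min 0 x = -max 0 (-x) := by
    intro x; simp [min_def, max_def]; split <;> split <;> linarith
  rw [hmin, hmin]
  have e1 : (-β - p) / ν = -p / ν - β / ν := by ring
  have e2 : -((β - p) / ν) = -(-p / ν) - β / ν := by ring
  have e3 : -ub + (-p - β) / ν = -p / ν - β / ν - ub := by
    field_simp; ring
  have e4 : -(ub + (-p + β) / ν) = -(-p / ν) - β / ν - ub := by
    field_simp; ring
  rw [e1, e2, e3, e4]; ring

theorem stmt_4 (ν β ub : ℝ) (hν : 0 < ν) (hβ : 0 ≤ β) (hub : 0 < ub) :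
    ∀ p q : ℝ, |mu ν β ub p - mu ν β ub q| ≤ (1 / ν) * |p - q| := by
  intro p q
  rw [mu_eq_fmu ν β ub p hν, mu_eq_fmu ν β ub q hν]
  have := fmu_lip ub (β / ν) hub.le (by positivity) (-q / ν) (-p / ν)
  have habs : |(-p / ν) - (-q / ν)| = (1 / ν) * |p - q| := by
    rw [show (-p / ν) - (-q / ν) = (1 / ν) * (q - p) by field_simp; ring,
      abs_mul, abs_of_pos (by positivity), abs_sub_comm]
  rw [habs] at this
  exact this
end

section
/- Let ν > 0, ū > 0, β ≥ 0, p ∈ ℝ and u = μ(p) where μ is the scalar optimality map. Then u minimizes over v ∈ [−ū, ū] the function v ↦ (ν/2)v² + p·v + β·|v|. -/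
theorem stmt_13 (ν β ub : ℝ) (hν : 0 < ν) (hβ : 0 ≤ β) (hub : 0 < ub) (p : ℝ) :
    mu ν β ub p ∈ Set.Icc (-ub) ub ∧
    ∀ v ∈ Set.Icc (-ub) ub,
      (ν / 2) * (mu ν β ub p) ^ 2 + p * mu ν β ub p + β * |mu ν β ub p| ≤
        (ν / 2) * v ^ 2 + p * v + β * |v| := by
  rcases le_or_gt p (-β) with hA | hA'
  · -- p ≤ -β
    have h1 : (0:ℝ) ≤ (-β - p) / ν := div_nonneg (by linarith) hν.le
    have h2 : (0:ℝ) ≤ (β - p) / ν := div_nonneg (by linarith) hν.le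
    have h4 : (0:ℝ) ≤ ub + (-p + β) / ν :=
      add_nonneg hub.le (div_nonneg (by linarith) hν.le)
    rcases le_or_gt (-β - p) (ν * ub) with hA1 | hA1
    · have h3 : -ub + (-p - β) / ν ≤ 0 := by
        have : (-p - β) / ν ≤ ub := by rw [div_le_iff₀ hν]; nlinarith
        linarith
      have hmu : mu ν β ub p = (-β - p) / ν := by
        unfold mu
        rw [max_eq_right h1, min_eq_left h2, max_eq_left h3, min_eq_left h4]
        ring
      have hu0 : 0 ≤ mu ν β ub p := hmu ▸ h1
      have huK : ν * mu ν β ub p = -β - p := by rw [hmu]; field_simp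
      have hule : mu ν β ub p ≤ ub := by nlinarith
      refine ⟨⟨by linarith, hule⟩, ?_⟩
      intro v hv
      rw [abs_of_nonneg hu0]
      set u := mu ν β ub p with hu
      have habs : β * v ≤ β * |v| := mul_le_mul_of_nonneg_left (le_abs_self v) hβ
      have key : ν / 2 * v ^ 2 + p * v + β * v - (ν / 2 * u ^ 2 + p * u + β * u)
          = ν / 2 * (v - u) ^ 2 + (ν * u + p + β) * (v - u) := by ring
      have h0 : (ν * u + p + β) * (v - u) = 0 := by rw [huK]; ring
      have hp2 : 0 ≤ ν / 2 * (v - u) ^ 2 := by positivity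
      linarith [key, h0, hp2, habs]
    · have h3 : 0 ≤ -ub + (-p - β) / ν := by
        have : ub ≤ (-p - β) / ν := by rw [le_div_iff₀ hν]; nlinarith
        linarith
      have hmu : mu ν β ub p = ub := by
        unfold mu
        rw [max_eq_right h1, min_eq_left h2, max_eq_right h3, min_eq_left h4]
        ring
      refine ⟨⟨by linarith, hmu.le⟩, ?_⟩
      intro v hv
      rw [hmu, abs_of_nonneg hub.le]
      have habs : β * v ≤ β * |v| := mul_le_mul_of_nonneg_left (le_abs_self v) hβ
      nlinarith [mul_nonneg (sub_nonneg.mpr hv.2) (by linarith : (0:ℝ) ≤ -(p + β) - ν * ub),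
        mul_nonneg hν.le (sq_nonneg (ub - v))]
  · rcases le_or_gt β p with hB | hB
    · -- β ≤ p
      have h1 : (-β - p) / ν ≤ 0 := div_nonpos_of_nonpos_of_nonneg (by linarith) hν.le
      have h2 : (β - p) / ν ≤ 0 := div_nonpos_of_nonpos_of_nonneg (by linarith) hν.le
      have h3 : -ub + (-p - β) / ν ≤ 0 := by
        have : (-p - β) / ν ≤ 0 := div_nonpos_of_nonpos_of_nonneg (by linarith) hν.le
        linarith
      rcases le_or_gt (-(ν * ub)) (β - p) with hB1 | hB1
      · have h4 : 0 ≤ ub + (-p + β) / ν := by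
          have : -ub ≤ (-p + β) / ν := by rw [le_div_iff₀ hν]; nlinarith
          linarith
        have hmu : mu ν β ub p = (β - p) / ν := by
          unfold mu
          rw [max_eq_left h1, min_eq_right h2, max_eq_left h3, min_eq_left h4]
          ring
        have hu0 : mu ν β ub p ≤ 0 := hmu ▸ h2
        have huK : ν * mu ν β ub p = β - p := by rw [hmu]; field_simp
        have huge : -ub ≤ mu ν β ub p := by nlinarith
        refine ⟨⟨huge, by linarith⟩, ?_⟩
        intro v hv
        rw [abs_of_nonpos hu0]
        set u := mu ν β ub p with hu
        have habs : β * -v ≤ β * |v| := mul_le_mul_of_nonneg_left (neg_le_abs v) hβ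
        have key : ν / 2 * v ^ 2 + p * v + β * -v - (ν / 2 * u ^ 2 + p * u + β * -u)
            = ν / 2 * (v - u) ^ 2 + (ν * u + p - β) * (v - u) := by ring
        have h0 : (ν * u + p - β) * (v - u) = 0 := by rw [huK]; ring
        have hp2 : 0 ≤ ν / 2 * (v - u) ^ 2 := by positivity
        linarith [key, h0, hp2, habs]
      · have h4 : ub + (-p + β) / ν ≤ 0 := by
          have : (-p + β) / ν ≤ -ub := by rw [div_le_iff₀ hν]; nlinarith
          linarith
        have hmu : mu ν β ub p = -ub := by
          unfold mu
          rw [max_eq_left h1, min_eq_right h2, max_eq_left h3, min_eq_right h4]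
          ring
        refine ⟨⟨hmu.ge, by linarith⟩, ?_⟩
        intro v hv
        rw [hmu, abs_neg, abs_of_nonneg hub.le]
        have habs : β * -v ≤ β * |v| := mul_le_mul_of_nonneg_left (neg_le_abs v) hβ
        nlinarith [mul_nonneg (by linarith [hv.1] : (0:ℝ) ≤ v + ub)
            (by nlinarith : (0:ℝ) ≤ (p - β) - ν * ub),
          mul_nonneg hν.le (sq_nonneg (v + ub))]
    · -- -β < p < β : u = 0
      have h1 : (-β - p) / ν ≤ 0 := div_nonpos_of_nonpos_of_nonneg (by linarith) hν.le
      have h2 : 0 ≤ (β - p) / ν := div_nonneg (by linarith) hν.le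
      have h3 : -ub + (-p - β) / ν ≤ 0 := by
        have : (-p - β) / ν ≤ 0 := div_nonpos_of_nonpos_of_nonneg (by linarith) hν.le
        linarith
      have h4 : 0 ≤ ub + (-p + β) / ν :=
        add_nonneg hub.le (div_nonneg (by linarith) hν.le)
      have hmu : mu ν β ub p = 0 := by
        unfold mu
        rw [max_eq_left h1, min_eq_left h2, max_eq_left h3, min_eq_left h4]
        ring
      refine ⟨⟨by rw [hmu]; linarith, by rw [hmu]; linarith⟩, ?_⟩
      intro v hv
      rw [hmu, abs_zero]
      have hpv : -(β * |v|) ≤ p * v := by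
        have h5 : |p * v| ≤ β * |v| := by
          rw [abs_mul]
          exact mul_le_mul_of_nonneg_right (abs_le.mpr ⟨by linarith, by linarith⟩) (abs_nonneg v)
        linarith [neg_abs_le (p * v)]
      nlinarith [hpv, mul_nonneg hν.le (sq_nonneg v)]
end

section
/- Let ν > 0, β ≥ 0, ū > 0 and μ the scalar optimality map. Then for two parameters ν₁ ≥ ν₂ > 0 and any p ∈ ℝ, |μ_{ν₁}(p) − μ_{ν₂}(p)| ≤ (|p| + β)·(1/ν₂ − 1/ν₁). -/
lemma clampf_lip (ub x y : ℝ) :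
    |(max 0 x - max 0 (-ub + x)) - (max 0 y - max 0 (-ub + y))| ≤ |x - y| := by
  have h1 := le_abs_self (x - y)
  have h2 := neg_abs_le (x - y)
  rcases le_total x 0 with hx | hx <;>
  rcases le_total y 0 with hy | hy <;>
  rcases le_total (-ub + x) 0 with hux | hux <;>
  rcases le_total (-ub + y) 0 with huy | huy <;>
  simp only [max_eq_left hx, max_eq_left hy, max_eq_left hux, max_eq_left huy,
    max_eq_right hx, max_eq_right hy, max_eq_right hux, max_eq_right huy] <;>
  rw [abs_le] <;> constructor <;> linarith

lemma clampg_lip (ub x y : ℝ) :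
    |(min 0 x - min 0 (ub + x)) - (min 0 y - min 0 (ub + y))| ≤ |x - y| := by
  have h1 := le_abs_self (x - y)
  have h2 := neg_abs_le (x - y)
  rcases le_total x 0 with hx | hx <;>
  rcases le_total y 0 with hy | hy <;>
  rcases le_total (ub + x) 0 with hux | hux <;>
  rcases le_total (ub + y) 0 with huy | huy <;>
  simp only [min_eq_left huy, min_eq_left hux, min_eq_left hy, min_eq_left hx,
    min_eq_right huy, min_eq_right hux, min_eq_right hy, min_eq_right hx] <;>
  rw [abs_le] <;> constructor <;> linarith

theorem stmt_18 (β ub : ℝ) (hβ : 0 ≤ β) (hub : 0 < ub)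
    (ν₁ ν₂ : ℝ) (hν₂ : 0 < ν₂) (h12 : ν₂ ≤ ν₁) :
    ∀ p : ℝ, |mu ν₁ β ub p - mu ν₂ β ub p| ≤ (|p| + β) * (1 / ν₂ - 1 / ν₁) := by
  intro p
  have hν₁ : 0 < ν₁ := lt_of_lt_of_le hν₂ h12
  have hinv : 1 / ν₁ ≤ 1 / ν₂ := one_div_le_one_div_of_le hν₂ h12
  have hfac : 0 ≤ 1 / ν₂ - 1 / ν₁ := by linarith
  have hRHS : 0 ≤ (|p| + β) * (1 / ν₂ - 1 / ν₁) :=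
    mul_nonneg (by positivity) hfac
  have hab : (-p - β) = (-β - p) := by ring
  have hba : (-p + β) = (β - p) := by ring
  rcases le_total p (-β) with hp | hp
  · -- p ≤ -β : only the max terms vary; set a = -β - p ≥ 0
    have hann : 0 ≤ -β - p := by linarith
    have hbnn : 0 ≤ β - p := by linarith
    have hm1 : min 0 ((β - p) / ν₁) = 0 := min_eq_left (div_nonneg hbnn hν₁.le)
    have hm2 : min 0 ((β - p) / ν₂) = 0 := min_eq_left (div_nonneg hbnn hν₂.le)
    have hm3 : min 0 (ub + (-p + β) / ν₁) = 0 := by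
      rw [hba]
      have := div_nonneg hbnn hν₁.le
      exact min_eq_left (by linarith)
    have hm4 : min 0 (ub + (-p + β) / ν₂) = 0 := by
      rw [hba]
      have := div_nonneg hbnn hν₂.le
      exact min_eq_left (by linarith)
    have key : |mu ν₁ β ub p - mu ν₂ β ub p|
        ≤ |(-β - p) / ν₁ - (-β - p) / ν₂| := by
      have := clampf_lip ub ((-β - p) / ν₁) ((-β - p) / ν₂)
      simp only [mu, hab, hm1, hm2, hm3, hm4] at *
      convert this using 2
      ring
    refine key.trans ?_
    have heq : (-β - p) / ν₁ - (-β - p) / ν₂ = -((-β - p) * (1 / ν₂ - 1 / ν₁)) := by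
      field_simp
      ring
    rw [heq, abs_neg, abs_of_nonneg (mul_nonneg hann hfac)]
    have hle : -β - p ≤ |p| + β := by
      have := neg_le_abs p
      linarith
    exact mul_le_mul_of_nonneg_right hle hfac
  · rcases le_total β p with hp' | hp'
    · -- β ≤ p : only the min terms vary; b = β - p ≤ 0
      have hanp : -β - p ≤ 0 := by linarith
      have hM1 : max 0 ((-β - p) / ν₁) = 0 := max_eq_left (div_nonpos_of_nonpos_of_nonneg hanp hν₁.le)
      have hM2 : max 0 ((-β - p) / ν₂) = 0 := max_eq_left (div_nonpos_of_nonpos_of_nonneg hanp hν₂.le)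
      have hM3 : max 0 (-ub + (-p - β) / ν₁) = 0 := by
        rw [hab]
        have := div_nonpos_of_nonpos_of_nonneg hanp hν₁.le
        exact max_eq_left (by linarith)
      have hM4 : max 0 (-ub + (-p - β) / ν₂) = 0 := by
        rw [hab]
        have := div_nonpos_of_nonpos_of_nonneg hanp hν₂.le
        exact max_eq_left (by linarith)
      have key : |mu ν₁ β ub p - mu ν₂ β ub p|
          ≤ |(β - p) / ν₁ - (β - p) / ν₂| := by
        have := clampg_lip ub ((β - p) / ν₁) ((β - p) / ν₂)
        simp only [mu, hba, hM1, hM2, hM3, hM4] at *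
        convert this using 2
        ring
      refine key.trans ?_
      have heq : (β - p) / ν₁ - (β - p) / ν₂ = (p - β) * (1 / ν₂ - 1 / ν₁) := by
        field_simp
        ring
      rw [heq, abs_of_nonneg (mul_nonneg (by linarith) hfac)]
      have hle : p - β ≤ |p| + β := by
        have := le_abs_self p
        linarith
      exact mul_le_mul_of_nonneg_right hle hfac
    · -- -β ≤ p ≤ β : mu vanishes for both parameters
      have hz : ∀ ν : ℝ, 0 < ν → mu ν β ub p = 0 := by
        intro ν hν
        have h1 : (-β - p) / ν ≤ 0 := div_nonpos_of_nonpos_of_nonneg (by linarith) hν.le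
        have h2 : 0 ≤ (β - p) / ν := div_nonneg (by linarith) hν.le
        have h3 : (-p - β) / ν ≤ 0 := div_nonpos_of_nonpos_of_nonneg (by linarith) hν.le
        have h4 : 0 ≤ (-p + β) / ν := div_nonneg (by linarith) hν.le
        simp only [mu, max_eq_left h1, min_eq_left h2,
          max_eq_left (by linarith : -ub + (-p - β) / ν ≤ 0),
          min_eq_left (by linarith : (0:ℝ) ≤ ub + (-p + β) / ν)]
        ring
      rw [hz ν₁ hν₁, hz ν₂ hν₂, sub_zero, abs_zero]
      exact hRHS
end
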